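/- arXiv:1605.07540 — 5 statements merged into one kernel-verified Lean document; each statement's English description precedes it below -/
import Mathlib

section
/- Let K be a field and B an associative K-algebra (not necessarily unital) with local units, i.e., for every b ∈ B there exists an idempotent e ∈ B with e·b = b = b·e. Then for every two-sided ideal J of B there exist a K-vector space V and a K-linear multiplicative map π : B → End_K(V) which is non-degenerate (V = span{π(b)ξ : b ∈ B, ξ ∈ V}) and satisfies ker(π) = J. -/
/-!
Let `B` act on `V = B ⧸ J` by left multiplication. Local units are what make this work in the
absence of a unit: `k • x = (k • e) * x` shows that `J` is a `K`-subspace, `e * x = x` shows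
that every class is of the form `π e ξ`, and `π b [e] = [b * e] = [b]` shows that `π b = 0`
forces `b ∈ J`.
-/

section

variable {K B : Type*} [CommRing K] [NonUnitalRing B] [Module K B] [IsScalarTower K B B]

namespace TwoSidedIdeal

def toSubmoduleOfLeftUnits (J : TwoSidedIdeal B) (hunit : ∀ x : B, ∃ e, e * x = x) :
    Submodule K B where
  carrier := J
  add_mem' := J.add_mem
  zero_mem' := J.zero_mem
  smul_mem' k x hx := by
    obtain ⟨e, he⟩ := hunit x
    rw [← he, ← smul_mul_assoc]
    exact J.mul_mem_left _ _ hx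

end TwoSidedIdeal

namespace Submodule

variable [SMulCommClass K B B] (W : Submodule K B) (hW : ∀ b, ∀ x ∈ W, b * x ∈ W)

def quotientMulLeft : B →ₗ[K] Module.End K (B ⧸ W) :=
  W.mapQLinear W ∘ₗ (LinearMap.mul K B).codRestrict (W.compatibleMaps W) fun b x hx => hW b x hx

@[simp]
theorem quotientMulLeft_mk (b x : B) :
    W.quotientMulLeft hW b (Quotient.mk x) = Quotient.mk (b * x) :=
  rfl

theorem quotientMulLeft_mul (a b : B) :
    W.quotientMulLeft hW (a * b) = W.quotientMulLeft hW a * W.quotientMulLeft hW b := by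
  ext x
  simp [mul_assoc]

theorem span_quotientMulLeft_eq_top (hunit : ∀ x : B, ∃ e, e * x = x) :
    span K {v : B ⧸ W | ∃ (b : B) (ξ : B ⧸ W), W.quotientMulLeft hW b ξ = v} = ⊤ := by
  refine eq_top_iff.mpr fun v _ => subset_span ?_
  obtain ⟨x, rfl⟩ := Quotient.mk_surjective W v
  obtain ⟨e, he⟩ := hunit x
  exact ⟨e, Quotient.mk x, by rw [quotientMulLeft_mk, he]⟩

theorem quotientMulLeft_eq_zero_iff (hW' : ∀ a, ∀ x ∈ W, x * a ∈ W)
    (hunit : ∀ x : B, ∃ e, x * e = x) (b : B) : W.quotientMulLeft hW b = 0 ↔ b ∈ W := by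
  refine ⟨fun h => ?_, fun hb => ?_⟩
  · obtain ⟨e, he⟩ := hunit b
    simpa [he] using LinearMap.congr_fun h (Quotient.mk e)
  · ext x
    simpa using hW' x b hb

end Submodule

end

/-- Let `K` be a field and `B` a (not necessarily unital) associative
`K`-algebra with local units.  Then every two-sided ideal `J` of `B` is the kernel of a
non-degenerate `K`-linear multiplicative representation `π : B → End_K(V)`. -/
theorem exists_nondegenerate_representation_with_kernel
    {K : Type*} {B : Type v} [Field K] [NonUnitalRing B]
    [Module K B] [SMulCommClass K B B] [IsScalarTower K B B]
    (hlu : ∀ b : B, ∃ e : B, e * e = e ∧ e * b = b ∧ b * e = b)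
    (J : TwoSidedIdeal B) :
    ∃ (V : Type v) (_ : AddCommGroup V) (_ : Module K V)
      (π : B →ₗ[K] Module.End K V),
      (∀ a b : B, π (a * b) = π a * π b) ∧
      (Submodule.span K {v : V | ∃ (b : B) (ξ : V), π b ξ = v} = ⊤) ∧
      (∀ b : B, π b = 0 ↔ b ∈ J) := by
  have hleft : ∀ x : B, ∃ e, e * x = x := fun x => (hlu x).imp fun _ he => he.2.1
  have hright : ∀ x : B, ∃ e, x * e = x := fun x => (hlu x).imp fun _ he => he.2.2
  let W : Submodule K B := J.toSubmoduleOfLeftUnits hleft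
  have hW : ∀ b, ∀ x ∈ W, b * x ∈ W := fun b x hx => J.mul_mem_left b x hx
  have hW' : ∀ a, ∀ x ∈ W, x * a ∈ W := fun a x hx => J.mul_mem_right x a hx
  exact ⟨B ⧸ W, inferInstance, inferInstance, W.quotientMulLeft hW, W.quotientMulLeft_mul hW,
    W.span_quotientMulLeft_eq_top hW hleft, W.quotientMulLeft_eq_zero_iff hW hW' hright⟩
end

section
/- Let x₀ ∈ X be a topologically free point, let Γ be a finite subset of G \ {1}, and let V be an open set with x₀ ∈ V ⊆ ⋂_{g∈Γ} X_{g⁻¹}. Then there exists y ∈ V ∩ Orb(x₀) such that θ_g(y) ≠ y for all g ∈ Γ. -/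
/-- A (topological) partial action of a discrete group `G` on a topological space `X`:
open sets `Xg g` and homeomorphisms `θ g : Xg g⁻¹ → Xg g` (encoded as globally defined
maps that are continuous on their domains, with continuous inverse `θ g⁻¹`). -/
structure PartialAction (G : Type*) [Group G] (X : Type*) [TopologicalSpace X] where
  Xg : G → Set X
  θ : G → X → X
  isOpen_Xg : ∀ g : G, IsOpen (Xg g)
  Xg_one : Xg 1 = Set.univ
  θ_one : ∀ x : X, θ 1 x = x
  mapsTo : ∀ g : G, ∀ x ∈ Xg g⁻¹, θ g x ∈ Xg g
  image_inter : ∀ g h : G, θ g '' (Xg g⁻¹ ∩ Xg h) = Xg g ∩ Xg (g * h)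
  θ_comp : ∀ g h : G, ∀ x : X, x ∈ Xg h⁻¹ → x ∈ Xg (g * h)⁻¹ → θ g (θ h x) = θ (g * h) x
  continuousOn : ∀ g : G, ContinuousOn (θ g) (Xg g⁻¹)

namespace PartialAction

variable {G : Type*} [Group G] {X : Type*} [TopologicalSpace X]

/-- `S x₀ = {g ∈ G : x₀ ∈ X_{g⁻¹}}`. -/
def S (P : PartialAction G X) (x₀ : X) : Set G := {g : G | x₀ ∈ P.Xg g⁻¹}

/-- The orbit of `x₀`:  `Orb(x₀) = {θ_g(x₀) : g ∈ S x₀}`. -/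
def orbit (P : PartialAction G X) (x₀ : X) : Set X :=
  {y : X | ∃ g : G, x₀ ∈ P.Xg g⁻¹ ∧ P.θ g x₀ = y}

/-- The isotropy group `H x₀ = {g ∈ S x₀ : θ_g(x₀) = x₀}`. -/
def isotropy (P : PartialAction G X) (x₀ : X) : Set G :=
  {g : G | x₀ ∈ P.Xg g⁻¹ ∧ P.θ g x₀ = x₀}

/-- A point `x₀` is topologically free if for every `g ≠ 1` and every open `V` with
`x₀ ∈ V ⊆ X_{g⁻¹}` there is `y ∈ V ∩ Orb(x₀)` with `θ_g(y) ≠ y`. -/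
def TopFreePoint (P : PartialAction G X) (x₀ : X) : Prop :=
  ∀ g : G, g ≠ 1 → ∀ V : Set X, IsOpen V → x₀ ∈ V → V ⊆ P.Xg g⁻¹ →
    ∃ y ∈ V ∩ P.orbit x₀, P.θ g y ≠ y

/-- A point `x` is strongly regular if for every `h` fixing `x` there is an open
`V` with `x ∈ V ⊆ X_{h⁻¹}` on which `θ_h` is the identity. -/
def StronglyRegular (P : PartialAction G X) (x : X) : Prop :=
  ∀ h : G, x ∈ P.Xg h⁻¹ → P.θ h x = x →
    ∃ V : Set X, IsOpen V ∧ x ∈ V ∧ V ⊆ P.Xg h⁻¹ ∧ ∀ y ∈ V, P.θ h y = y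

end PartialAction


/-!
The set of points moved by `θ_g` is open because `X` is Hausdorff. Hence a point of the orbit
moved by every element of `Γ'` has an open neighbourhood of such points, and topological
freeness at that point yields a point of the orbit in this neighbourhood that `θ_g` moves too.
Topological freeness passes from `x₀` to every point `θ_h(x₀)` of its orbit: a fixed point
`θ_h(x₀)` of `θ_g` corresponds to the fixed point `x₀` of the conjugate `θ_{h⁻¹gh}`.
-/

namespace PartialAction

variable {G : Type*} [Group G] {X : Type*} [TopologicalSpace X] (P : PartialAction G X)

def moved (g : G) : Set X := {z ∈ P.Xg g⁻¹ | P.θ g z ≠ z}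

lemma θ_inv_θ {h : G} {x : X} (hx : x ∈ P.Xg h⁻¹) : P.θ h⁻¹ (P.θ h x) = x := by
  simpa [P.θ_one] using P.θ_comp h⁻¹ h x hx (by simp [P.Xg_one])

lemma mem_Xg_mul_inv {g h : G} {x : X} (hx : x ∈ P.Xg h⁻¹) (hgx : P.θ h x ∈ P.Xg g⁻¹) :
    x ∈ P.Xg (g * h)⁻¹ := by
  have hmem : P.θ h⁻¹ (P.θ h x) ∈ P.Xg h⁻¹ ∩ P.Xg (h⁻¹ * g⁻¹) := by
    rw [← P.image_inter h⁻¹ g⁻¹]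
    exact Set.mem_image_of_mem _ ⟨by simpa using P.mapsTo h x hx, hgx⟩
  rw [P.θ_inv_θ hx] at hmem
  simpa [mul_inv_rev] using hmem.2

lemma θ_θ {g h : G} {x : X} (hx : x ∈ P.Xg h⁻¹) (hgx : P.θ h x ∈ P.Xg g⁻¹) :
    P.θ g (P.θ h x) = P.θ (g * h) x :=
  P.θ_comp g h x hx (P.mem_Xg_mul_inv hx hgx)

lemma θ_conj_eq_self {g h : G} {u : X} (hu : u ∈ P.Xg h⁻¹) (hgu : P.θ h u ∈ P.Xg g⁻¹)
    (hfix : P.θ g (P.θ h u) = P.θ h u) :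
    u ∈ P.Xg (h⁻¹ * g * h)⁻¹ ∧ P.θ (h⁻¹ * g * h) u = u := by
  have hgh : P.θ (g * h) u = P.θ h u := by rw [← P.θ_θ hu hgu, hfix]
  have hmem : P.θ (g * h) u ∈ P.Xg h⁻¹⁻¹ := by
    rw [hgh, inv_inv]
    exact P.mapsTo h u hu
  have hdom : u ∈ P.Xg (g * h)⁻¹ := P.mem_Xg_mul_inv hu hgu
  rw [mul_assoc]
  exact ⟨P.mem_Xg_mul_inv hdom hmem, by rw [← P.θ_θ hdom hmem, hgh, P.θ_inv_θ hu]⟩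

lemma isOpen_moved [T2Space X] (g : G) : IsOpen (P.moved g) :=
  (P.continuousOn g).prodMk continuousOn_id |>.isOpen_inter_preimage (P.isOpen_Xg g⁻¹)
    isClosed_diagonal.isOpen_compl

lemma self_mem_orbit (x : X) : x ∈ P.orbit x :=
  ⟨1, by simp [P.Xg_one], P.θ_one x⟩

lemma θ_mem_orbit {x y : X} {h : G} (hy : y ∈ P.orbit x) (hyh : y ∈ P.Xg h⁻¹) :
    P.θ h y ∈ P.orbit x := by
  obtain ⟨k, hk, rfl⟩ := hy
  exact ⟨h * k, P.mem_Xg_mul_inv hk hyh, (P.θ_θ hk hyh).symm⟩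

lemma orbit_subset_of_mem_orbit {x y : X} (hy : y ∈ P.orbit x) : P.orbit y ⊆ P.orbit x := by
  rintro _ ⟨k, hk, rfl⟩
  exact P.θ_mem_orbit hy hk

lemma orbit_eq_of_mem_orbit {x y : X} (hy : y ∈ P.orbit x) : P.orbit y = P.orbit x := by
  refine (P.orbit_subset_of_mem_orbit hy).antisymm (P.orbit_subset_of_mem_orbit ?_)
  obtain ⟨h, hh, rfl⟩ := hy
  have hdom : P.θ h x ∈ P.Xg h⁻¹⁻¹ := by simpa using P.mapsTo h x hh
  simpa [P.θ_inv_θ hh] using P.θ_mem_orbit (P.self_mem_orbit (P.θ h x)) hdom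

variable {P} in
lemma TopFreePoint.of_mem_orbit {x y : X} (hx : P.TopFreePoint x) (hy : y ∈ P.orbit x) :
    P.TopFreePoint y := by
  intro g hg V hV hyV hVsub
  by_cases hmoved : P.θ g y ≠ y
  · exact ⟨y, ⟨hyV, P.self_mem_orbit y⟩, hmoved⟩
  rw [P.orbit_eq_of_mem_orbit hy]
  obtain ⟨h, hh, rfl⟩ := hy
  have hconj : h⁻¹ * g * h ≠ 1 := fun h1 =>
    hg (by simpa [mul_assoc] using congrArg (h * · * h⁻¹) h1)
  let U : Set X := P.Xg h⁻¹ ∩ P.θ h ⁻¹' V ∩ P.Xg (h⁻¹ * g * h)⁻¹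
  have hU : IsOpen U :=
    ((P.continuousOn h).isOpen_inter_preimage (P.isOpen_Xg h⁻¹) hV).inter (P.isOpen_Xg _)
  have hxU : x ∈ U := ⟨⟨hh, hyV⟩, (P.θ_conj_eq_self hh (hVsub hyV) (not_not.mp hmoved)).1⟩
  obtain ⟨u, ⟨⟨⟨huh, huV⟩, -⟩, hux⟩, humoved⟩ := hx _ hconj U hU hxU fun _ hz => hz.2
  exact ⟨P.θ h u, ⟨huV, P.θ_mem_orbit hux huh⟩,
    fun hfix => humoved (P.θ_conj_eq_self huh (hVsub huV) hfix).2⟩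

end PartialAction

theorem topFreePoint_stronger_property_general
    {G X : Type*} [Group G] [TopologicalSpace X]
    [T2Space X]
    (P : PartialAction G X)
    (x₀ : X) (hx₀ : P.TopFreePoint x₀)
    (Γ : Finset G) (hΓ : ∀ g ∈ Γ, g ≠ (1 : G))
    (V : Set X) (hV : IsOpen V) (hx₀V : x₀ ∈ V)
    (hVsub : ∀ g ∈ Γ, V ⊆ P.Xg g⁻¹) :
    ∃ y ∈ V ∩ P.orbit x₀, ∀ g ∈ Γ, P.θ g y ≠ y := by
  classical
  induction Γ using Finset.induction_on with
  | empty => exact ⟨x₀, ⟨hx₀V, P.self_mem_orbit x₀⟩, by simp⟩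
  | @insert g Γ' _ ih =>
    obtain ⟨y, ⟨hyV, hyx⟩, hymoved⟩ := ih (fun k hk => hΓ k (Finset.mem_insert_of_mem hk))
      (fun k hk => hVsub k (Finset.mem_insert_of_mem hk))
    let W : Set X := V ∩ ⋂ k ∈ Γ', P.moved k
    have hW : IsOpen W := hV.inter (isOpen_biInter_finset fun k _ => P.isOpen_moved k)
    have hyW : y ∈ W := ⟨hyV, Set.mem_iInter₂.mpr fun k hk =>
      ⟨hVsub k (Finset.mem_insert_of_mem hk) hyV, hymoved k hk⟩⟩
    obtain ⟨z, ⟨⟨hzV, hzmoved⟩, hzy⟩, hgz⟩ := (hx₀.of_mem_orbit hyx) g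
      (hΓ g (Finset.mem_insert_self g Γ')) W hW hyW
      fun _ hz => hVsub g (Finset.mem_insert_self g Γ') hz.1
    refine ⟨z, ⟨hzV, P.orbit_subset_of_mem_orbit hyx hzy⟩, fun k hk => ?_⟩
    rcases Finset.mem_insert.mp hk with rfl | hk
    · exact hgz
    · exact (Set.mem_iInter₂.mp hzmoved k hk).2

/-- If `x₀` is a topologically free point, `Γ` a finite subset of
`G \ {1}` and `V` an open set with `x₀ ∈ V ⊆ ⋂_{g ∈ Γ} X_{g⁻¹}`, then there is
`y ∈ V ∩ Orb(x₀)` with `θ_g(y) ≠ y` for all `g ∈ Γ`. -/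
theorem topFreePoint_stronger_property
    {G X : Type*} [Group G] [TopologicalSpace X]
    [T2Space X] [LocallyCompactSpace X] [TotallyDisconnectedSpace X]
    (P : PartialAction G X) (hclopen : ∀ g : G, IsClopen (P.Xg g))
    (x₀ : X) (hx₀ : P.TopFreePoint x₀)
    (Γ : Finset G) (hΓ : ∀ g ∈ Γ, g ≠ (1 : G))
    (V : Set X) (hV : IsOpen V) (hx₀V : x₀ ∈ V)
    (hVsub : ∀ g ∈ Γ, V ⊆ P.Xg g⁻¹) :
    ∃ y ∈ V ∩ P.orbit x₀, ∀ g ∈ Γ, P.θ g y ≠ y :=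
  topFreePoint_stronger_property_general P x₀ hx₀ Γ hΓ V hV hx₀V hVsub
end

section
/- Assume G is countable. Then the set of strongly regular points of X is dense in X. -/
/-!
The fixed-point set of each `θ_h` is closed, so its frontier is closed with empty interior.
A point outside every frontier is strongly regular: if `θ_h` fixes it, it lies in the fixed-point
set but not on its boundary, hence in its interior. Since `G` is countable and a locally
compact Hausdorff space is Baire, the points outside every frontier form a dense set.
-/

open Set

theorem dense_iInter_compl_frontier {X ι : Type*} [TopologicalSpace X] [BaireSpace X]
    [Countable ι] {f : ι → Set X} (hf : ∀ i, IsClosed (f i)) :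
    Dense (⋂ i, (frontier (f i))ᶜ) := by
  refine dense_iInter_of_isOpen (fun i => isClosed_frontier.isOpen_compl) fun i => ?_
  rw [← interior_eq_empty_iff_dense_compl]
  exact interior_frontier (hf i)

namespace PartialAction

variable {G : Type*} [Group G] {X : Type*} [TopologicalSpace X]

def fixedSet (P : PartialAction G X) (h : G) : Set X := {y ∈ P.Xg h⁻¹ | P.θ h y = y}

theorem isClosed_fixedSet [T2Space X] (P : PartialAction G X) {h : G}
    (hclosed : IsClosed (P.Xg h⁻¹)) : IsClosed (P.fixedSet h) :=
  hclosed.isClosed_eq (P.continuousOn h) continuousOn_id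

theorem stronglyRegular_of_forall_notMem_frontier (P : PartialAction G X) {x : X}
    (hx : ∀ h, x ∉ frontier (P.fixedSet h)) : P.StronglyRegular x := by
  intro h hxh hfix
  have hint : x ∈ interior (P.fixedSet h) :=
    self_sdiff_frontier (P.fixedSet h) ▸ ⟨⟨hxh, hfix⟩, hx h⟩
  exact ⟨interior (P.fixedSet h), isOpen_interior, hint,
    fun y hy => (interior_subset hy).1, fun y hy => (interior_subset hy).2⟩

end PartialAction

theorem dense_stronglyRegular_general
    {G X : Type*} [Group G] [Countable G] [TopologicalSpace X]
    [T2Space X] [LocallyCompactSpace X]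
    (P : PartialAction G X) (hclopen : ∀ g : G, IsClopen (P.Xg g)) :
    Dense {x : X | P.StronglyRegular x} := by
  have hdense := dense_iInter_compl_frontier fun h => P.isClosed_fixedSet (hclopen h⁻¹).isClosed
  exact hdense.mono fun x hx =>
    P.stronglyRegular_of_forall_notMem_frontier fun h => mem_iInter.1 hx h

/-- If `G` is countable then the set of strongly regular points is dense. -/
theorem dense_stronglyRegular
    {G X : Type*} [Group G] [Countable G] [TopologicalSpace X]
    [T2Space X] [LocallyCompactSpace X] [TotallyDisconnectedSpace X]
    (P : PartialAction G X) (hclopen : ∀ g : G, IsClopen (P.Xg g)) :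
    Dense {x : X | P.StronglyRegular x} :=
  dense_stronglyRegular_general P hclopen
end

section
/- Let x₀ ∈ X, let Γ ⊆ G, and let k ∈ S_{x₀} be such that for every g ∈ Γ one has θ_k(x₀) ∈ X_{g⁻¹} and θ_g(θ_k(x₀)) = θ_k(x₀). Suppose l ∈ G is such that Γ ∩ kH_{x₀}l⁻¹ is nonempty, i.e., k⁻¹g₁l ∈ H_{x₀} for some g₁ ∈ Γ. Then l ∈ S_{x₀}, θ_l(x₀) = θ_k(x₀), and Γ ⊆ kH_{x₀}l⁻¹, i.e., k⁻¹gl ∈ H_{x₀} for every g ∈ Γ. -/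
/-!
Call `g` an arrow `x ⟶ y` when `θ_g` is defined at `x` and sends it to `y`. The axioms of a
partial action make these arrows closed under inverses and composition, so they form a groupoid
on `X` whose vertex group at `x₀` is `H_{x₀}`. With `y₀ = θ_k(x₀)`, the element
`l = g₁⁻¹ · k · (k⁻¹g₁l)` is then a composite `x₀ ⟶ x₀ ⟶ y₀ ⟶ y₀`, and for `g ∈ Γ` the element
`k⁻¹gl` is the loop `x₀ ⟶ y₀ ⟶ y₀ ⟶ x₀`.
-/

namespace PartialAction

variable {G X : Type*} [Group G] [TopologicalSpace X] (P : PartialAction G X)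

def Sends (g : G) (x y : X) : Prop := x ∈ P.Xg g⁻¹ ∧ P.θ g x = y

variable {P}

theorem sends_of_mem_S {g : G} {x : X} (hg : g ∈ P.S x) : P.Sends g x (P.θ g x) := ⟨hg, rfl⟩

theorem Sends.mem_S {g : G} {x y : X} (h : P.Sends g x y) : g ∈ P.S x := h.1

theorem Sends.inv {g : G} {x y : X} (h : P.Sends g x y) : P.Sends g⁻¹ y x := by
  obtain ⟨hx, rfl⟩ := h
  refine ⟨by simpa using P.mapsTo g x hx, ?_⟩
  rw [P.θ_comp g⁻¹ g x hx (by simp [P.Xg_one]), inv_mul_cancel, P.θ_one]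

theorem Sends.mul {g h : G} {x y z : X} (hxy : P.Sends h x y) (hyz : P.Sends g y z) :
    P.Sends (g * h) x z := by
  obtain ⟨hy, hyx⟩ := hxy.inv
  have hx : x ∈ P.Xg (g * h)⁻¹ := by
    have hmem : P.θ h⁻¹ y ∈ P.θ h⁻¹ '' (P.Xg h⁻¹⁻¹ ∩ P.Xg g⁻¹) := ⟨y, ⟨hy, hyz.1⟩, rfl⟩
    rw [P.image_inter, hyx, ← mul_inv_rev] at hmem
    exact hmem.2
  refine ⟨hx, ?_⟩
  rw [← P.θ_comp g h x hxy.1 hx, hxy.2, hyz.2]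

end PartialAction

open PartialAction in
/-- Under the hypotheses of the previous lemma, if `l ∈ G` is such that
`Γ ∩ k H_{x₀} l⁻¹ ≠ ∅`, then `l ∈ S x₀`, `θ_l(x₀) = θ_k(x₀)`, and `Γ ⊆ k H_{x₀} l⁻¹`. -/
theorem fixingConjuga_two
    {G X : Type*} [Group G] [TopologicalSpace X]
    (P : PartialAction G X) (x₀ : X) (Γ : Set G) (k : G)
    (hk : k ∈ P.S x₀)
    (hfix : ∀ g ∈ Γ, P.θ k x₀ ∈ P.Xg g⁻¹ ∧ P.θ g (P.θ k x₀) = P.θ k x₀)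
    (l : G) (g₁ : G) (hg₁ : g₁ ∈ Γ)
    (hg₁l : k⁻¹ * g₁ * l ∈ P.isotropy x₀) :
    l ∈ P.S x₀ ∧ P.θ l x₀ = P.θ k x₀ ∧
      ∀ g ∈ Γ, k⁻¹ * g * l ∈ P.isotropy x₀ := by
  have hk : P.Sends k x₀ (P.θ k x₀) := sends_of_mem_S hk
  have hfix (g : G) (hg : g ∈ Γ) : P.Sends g (P.θ k x₀) (P.θ k x₀) := hfix g hg
  have hg₁l : P.Sends (k⁻¹ * g₁ * l) x₀ x₀ := hg₁l
  have hl : P.Sends l x₀ (P.θ k x₀) := by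
    simpa [mul_assoc] using (hg₁l.mul hk).mul (hfix g₁ hg₁).inv
  refine ⟨hl.mem_S, hl.2, fun g hg => ?_⟩
  rw [mul_assoc]
  exact (hl.mul (hfix g hg)).mul hk.inv
end

section
/- ⋂_{x∈X} Z_x = {0}; that is, if a vector ξ ∈ V lies in Z_x for every x ∈ X, then ξ = 0. -/
/-- `f : X → K` is locally constant with compact support. -/
def IsLc {X : Type*} [TopologicalSpace X] {K : Type*} [Zero K] (f : X → K) : Prop :=
  IsLocallyConstant f ∧ HasCompactSupport f

/-!
View `V` as a module over `L_c(X)` through `π`. Non-degeneracy puts every `ξ` in the range of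
`π(1_U)` for some compact clopen `U`, so `ξ = π(e) ξ` for every `e ∈ L_c(X)` equal to `1` on `U`.
If `ξ ∈ Z_x`, then near `x` each of the finitely many `g ∈ I_x` involved vanishes, so an
indicator `e` of a compact clopen neighbourhood of `x` inside `U` kills `ξ`. These local
annihilators glue over the compact set `U`: if `e`, `e'` kill `ξ`, so does `e + e' - e e'`,
which is `1` wherever `e` or `e'` is. Hence some `e` equal to `1` on `U` kills `ξ`, and
`ξ = π(e) ξ = 0`.
-/

open Set Filter Topology

section

variable {X K V : Type*} [TopologicalSpace X]

lemma isLc_zero [Zero K] : IsLc (0 : X → K) :=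
  ⟨.const 0, .zero⟩

lemma IsLc.add [AddZeroClass K] {f g : X → K} (hf : IsLc f) (hg : IsLc g) : IsLc (f + g) :=
  ⟨hf.1.add hg.1, hf.2.add hg.2⟩

lemma IsLc.sub [SubtractionMonoid K] {f g : X → K} (hf : IsLc f) (hg : IsLc g) :
    IsLc (f - g) :=
  ⟨hf.1.sub hg.1, hf.2.sub hg.2⟩

lemma IsLc.mul [MulZeroClass K] {f g : X → K} (hf : IsLc f) (hg : IsLc g) : IsLc (f * g) :=
  ⟨hf.1.mul hg.1, hf.2.mul_right⟩

lemma IsClopen.isLc_indicator_one [MulZeroOneClass K] {U : Set X} (hU : IsClopen U)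
    (hUc : IsCompact U) : IsLc (U.indicator (1 : X → K)) :=
  ⟨LocallyConstant.coe_charFn K hU ▸ (LocallyConstant.charFn K hU).isLocallyConstant,
    .intro' hUc hU.isClosed fun _ hx => indicator_of_notMem hx _⟩

lemma IsLc.isClopen_support [Zero K] {f : X → K} (hf : IsLc f) :
    IsClopen (Function.support f) :=
  (hf.1.isClopen_fiber 0).compl

lemma IsLc.isCompact_support [Zero K] {f : X → K} (hf : IsLc f) :
    IsCompact (Function.support f) :=
  hf.2.isCompact.of_isClosed_subset hf.isClopen_support.isClosed (subset_tsupport f)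

section Representation

variable [CommRing K] [AddCommGroup V] [Module K V] {π : (X → K) → (V →ₗ[K] V)}

lemma map_sub_of_map_add (hadd : ∀ f g : X → K, IsLc f → IsLc g → π (f + g) = π f + π g)
    {f g : X → K} (hf : IsLc f) (hg : IsLc g) : π (f - g) = π f - π g :=
  eq_sub_of_add_eq (by rw [← hadd _ _ (hf.sub hg) hg, sub_add_cancel])

lemma map_zero_of_map_add (hadd : ∀ f g : X → K, IsLc f → IsLc g → π (f + g) = π f + π g) :
    π 0 = 0 := by
  simpa using map_sub_of_map_add hadd (isLc_zero (X := X)) isLc_zero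

def VanishesOn (π : (X → K) → (V →ₗ[K] V)) (ξ : V) (S : Set X) : Prop :=
  ∃ e : X → K, IsLc e ∧ EqOn e 1 S ∧ π e ξ = 0

def SupportedIn (π : (X → K) → (V →ₗ[K] V)) (ξ : V) (U : Set X) : Prop :=
  ∀ e : X → K, IsLc e → EqOn e 1 U → π e ξ = ξ

namespace VanishesOn

variable {ξ ζ : V} {S T : Set X}

lemma empty (hadd : ∀ f g : X → K, IsLc f → IsLc g → π (f + g) = π f + π g) :
    VanishesOn π ξ ∅ :=
  ⟨0, isLc_zero, eqOn_empty _ _, by rw [map_zero_of_map_add hadd, LinearMap.zero_apply]⟩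

lemma mono (h : VanishesOn π ξ T) (hST : S ⊆ T) : VanishesOn π ξ S :=
  let ⟨e, he, he1, heξ⟩ := h
  ⟨e, he, he1.mono hST, heξ⟩

lemma union (hadd : ∀ f g : X → K, IsLc f → IsLc g → π (f + g) = π f + π g)
    (hmul : ∀ f g : X → K, IsLc f → IsLc g → π (f * g) = π f ∘ₗ π g)
    (hS : VanishesOn π ξ S) (hT : VanishesOn π ξ T) : VanishesOn π ξ (S ∪ T) := by
  obtain ⟨e, he, he1, heξ⟩ := hS
  obtain ⟨e', he', he'1, he'ξ⟩ := hT
  refine ⟨e + e' - e * e', (he.add he').sub (he.mul he'), ?_, ?_⟩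
  · rintro x (hx | hx)
    · simp [he1 hx]
    · simp [he'1 hx]
  · rw [map_sub_of_map_add hadd (he.add he') (he.mul he'), hadd _ _ he he', hmul _ _ he he']
    simp [heξ, he'ξ]

lemma add (hmul : ∀ f g : X → K, IsLc f → IsLc g → π (f * g) = π f ∘ₗ π g)
    (hS : VanishesOn π ξ S) (hT : VanishesOn π ζ T) : VanishesOn π (ξ + ζ) (S ∩ T) := by
  obtain ⟨e, he, he1, heξ⟩ := hS
  obtain ⟨e', he', he'1, he'ζ⟩ := hT
  refine ⟨e * e', he.mul he', fun x hx => by simp [he1 hx.1, he'1 hx.2], ?_⟩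
  have hξ : π (e * e') ξ = 0 := by rw [mul_comm, hmul _ _ he' he]; simp [heξ]
  have hζ : π (e * e') ζ = 0 := by rw [hmul _ _ he he']; simp [he'ζ]
  rw [map_add, hξ, hζ, add_zero]

lemma smul (h : VanishesOn π ξ S) (c : K) : VanishesOn π (c • ξ) S :=
  let ⟨e, he, he1, heξ⟩ := h
  ⟨e, he, he1, by rw [map_smul, heξ, smul_zero]⟩

lemma of_forall_nhdsWithin (hadd : ∀ f g : X → K, IsLc f → IsLc g → π (f + g) = π f + π g)
    (hmul : ∀ f g : X → K, IsLc f → IsLc g → π (f * g) = π f ∘ₗ π g) (hS : IsCompact S)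
    (h : ∀ x ∈ S, ∃ t ∈ 𝓝[S] x, VanishesOn π ξ t) : VanishesOn π ξ S :=
  hS.induction_on (empty hadd) (fun _ _ hst ht => ht.mono hst) (fun _ _ => union hadd hmul) h

end VanishesOn

lemma vanishesOn_apply_of_eqOn_zero
    (hadd : ∀ f g : X → K, IsLc f → IsLc g → π (f + g) = π f + π g)
    (hmul : ∀ f g : X → K, IsLc f → IsLc g → π (f * g) = π f ∘ₗ π g)
    {S : Set X} (hS : IsClopen S) (hSc : IsCompact S) {g : X → K} (hg : IsLc g)
    (hgS : EqOn g 0 S) (η : V) : VanishesOn π (π g η) S := by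
  have hS1 := hS.isLc_indicator_one (K := K) hSc
  refine ⟨S.indicator 1, hS1, fun x hx => indicator_of_mem hx _, ?_⟩
  have hzero : S.indicator 1 * g = 0 := by
    ext x
    by_cases hx : x ∈ S
    · simp [hgS hx]
    · simp [hx]
  rw [← LinearMap.comp_apply, ← hmul _ _ hS1 hg, hzero, map_zero_of_map_add hadd,
    LinearMap.zero_apply]

lemma exists_mem_nhds_vanishesOn
    (hadd : ∀ f g : X → K, IsLc f → IsLc g → π (f + g) = π f + π g)
    (hmul : ∀ f g : X → K, IsLc f → IsLc g → π (f * g) = π f ∘ₗ π g)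
    {U : Set X} (hU : IsClopen U) (hUc : IsCompact U) {x : X} (hx : x ∈ U) {ξ : V}
    (hξ : ξ ∈ Submodule.span K {v : V | ∃ (g : X → K) (η : V), IsLc g ∧ g x = 0 ∧ π g η = v}) :
    ∃ t ∈ 𝓝 x, VanishesOn π ξ t := by
  induction hξ using Submodule.span_induction with
  | mem v hv =>
    obtain ⟨g, η, hg, hgx, rfl⟩ := hv
    have hZ : IsClopen {y | g y = 0} := hg.1.isClopen_fiber 0
    refine ⟨U ∩ {y | g y = 0}, inter_mem (hU.isOpen.mem_nhds hx) (hZ.isOpen.mem_nhds hgx), ?_⟩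
    exact vanishesOn_apply_of_eqOn_zero hadd hmul (hU.inter hZ)
      (hUc.inter_right hZ.isClosed) hg (fun y hy => hy.2) η
  | zero =>
    exact ⟨U, hU.isOpen.mem_nhds hx, U.indicator 1, hU.isLc_indicator_one hUc,
      fun y hy => indicator_of_mem hy _, map_zero _⟩
  | add ξ ζ _ _ hξ hζ =>
    obtain ⟨t, ht, hξt⟩ := hξ
    obtain ⟨t', ht', hζt'⟩ := hζ
    exact ⟨t ∩ t', inter_mem ht ht', hξt.add hmul hζt'⟩
  | smul c ξ _ hξ =>
    obtain ⟨t, ht, hξt⟩ := hξ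
    exact ⟨t, ht, hξt.smul c⟩

lemma exists_supportedIn (hmul : ∀ f g : X → K, IsLc f → IsLc g → π (f * g) = π f ∘ₗ π g)
    {ξ : V} (hξ : ξ ∈ Submodule.span K {v : V | ∃ (f : X → K) (η : V), IsLc f ∧ π f η = v}) :
    ∃ U : Set X, IsClopen U ∧ IsCompact U ∧ SupportedIn π ξ U := by
  induction hξ using Submodule.span_induction with
  | mem v hv =>
    obtain ⟨f, η, hf, rfl⟩ := hv
    refine ⟨_, hf.isClopen_support, hf.isCompact_support, fun e he he1 => ?_⟩
    have hef : e * f = f := by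
      ext x
      by_cases hx : f x = 0
      · simp [hx]
      · simp [he1 hx]
    rw [← LinearMap.comp_apply, ← hmul _ _ he hf, hef]
  | zero => exact ⟨∅, isClopen_empty, isCompact_empty, fun e _ _ => map_zero _⟩
  | add ξ ζ _ _ hξ hζ =>
    obtain ⟨U, hU, hUc, hξU⟩ := hξ
    obtain ⟨U', hU', hU'c, hζU'⟩ := hζ
    refine ⟨U ∪ U', hU.union hU', hUc.union hU'c, fun e he he1 => ?_⟩
    rw [map_add, hξU e he (he1.mono subset_union_left), hζU' e he (he1.mono subset_union_right)]
  | smul c ξ _ hξ =>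
    obtain ⟨U, hU, hUc, hξU⟩ := hξ
    exact ⟨U, hU, hUc, fun e he he1 => by rw [map_smul, hξU e he he1]⟩

lemma SupportedIn.eq_zero_of_vanishesOn {ξ : V} {U : Set X} (hU : SupportedIn π ξ U)
    (hξ : VanishesOn π ξ U) : ξ = 0 :=
  let ⟨e, he, he1, heξ⟩ := hξ
  (hU e he he1).symm.trans heξ

end Representation

end

theorem iInter_Zx_eq_bot_general
    {X K V : Type*} [TopologicalSpace X] [Field K] [AddCommGroup V] [Module K V]
    (π : (X → K) → (V →ₗ[K] V))
    (hadd : ∀ f g : X → K, IsLc f → IsLc g → π (f + g) = π f + π g)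
    (hmul : ∀ f g : X → K, IsLc f → IsLc g → π (f * g) = π f ∘ₗ π g)
    (hnd : Submodule.span K {v : V | ∃ (f : X → K) (ξ : V), IsLc f ∧ π f ξ = v} = ⊤)
    (ξ : V)
    (h : ∀ x : X, ξ ∈
      Submodule.span K {v : V | ∃ (g : X → K) (η : V), IsLc g ∧ g x = 0 ∧ π g η = v}) :
    ξ = 0 := by
  obtain ⟨U, hU, hUc, hξU⟩ := exists_supportedIn hmul (hnd ▸ Submodule.mem_top (x := ξ))
  refine hξU.eq_zero_of_vanishesOn (.of_forall_nhdsWithin hadd hmul hUc fun x hx => ?_)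
  obtain ⟨t, ht, hξt⟩ := exists_mem_nhds_vanishesOn hadd hmul hU hUc hx (h x)
  exact ⟨t, mem_nhdsWithin_of_mem_nhds ht, hξt⟩

/-- Let `π` be a non-degenerate multiplicative `K`-linear representation of
`L_c(X)` on `V`.  Then `⋂_{x ∈ X} Z_x = {0}`, where
`Z_x = span{π(g)η : g ∈ I_x, η ∈ V}`. -/
theorem iInter_Zx_eq_bot
    {X K V : Type*} [TopologicalSpace X] [T2Space X] [LocallyCompactSpace X]
    [TotallyDisconnectedSpace X] [Field K] [AddCommGroup V] [Module K V]
    (π : (X → K) → (V →ₗ[K] V))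
    (hadd : ∀ f g : X → K, IsLc f → IsLc g → π (f + g) = π f + π g)
    (hsmul : ∀ (c : K) (f : X → K), IsLc f → π (c • f) = c • π f)
    (hmul : ∀ f g : X → K, IsLc f → IsLc g → π (f * g) = π f ∘ₗ π g)
    (hnd : Submodule.span K {v : V | ∃ (f : X → K) (ξ : V), IsLc f ∧ π f ξ = v} = ⊤)
    (ξ : V)
    (h : ∀ x : X, ξ ∈
      Submodule.span K {v : V | ∃ (g : X → K) (η : V), IsLc g ∧ g x = 0 ∧ π g η = v}) :
    ξ = 0 :=
  iInter_Zx_eq_bot_general π hadd hmul hnd ξ h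
end
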